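/- arXiv:1503.04616 — 3 statements merged into one kernel-verified Lean document; each statement's English description precedes it below -/
import Mathlib

section
/- Assume ϑ(ℤ) > 1, the support of ϑ contains at least two points, and 0 ∈ 𝒟_φ. Then inf_{β > 0} φ(β)/β > φ'(0) and sup_{β < 0} φ(β)/β < φ'(0), where φ(β)/β is interpreted as +∞ when β > 0 and φ(β) = +∞, and as −∞ when β < 0 and φ(β) = +∞. -/
open Real Filter Topology MeasureTheory Metric Set

noncomputable section

/-- The cumulant generating function `φ(β) = log ∑_{k∈ℤ} e^{βk} θ(k)` of the measure on `ℤ`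
with mass function `θ`.  (Outside the finiteness set the `tsum` is junk; the statements only
use `cgf` on the finiteness set or its interior.) -/
def cgf (θ : ℤ → ℝ) (β : ℝ) : ℝ := Real.log (∑' k : ℤ, Real.exp (β * k) * θ k)

/-- The set `{β : φ(β) < ∞}`. -/
def finiteSet (θ : ℤ → ℝ) : Set ℝ := {β : ℝ | Summable fun k : ℤ => Real.exp (β * k) * θ k}

/-- `𝒟_φ`, the interior of the set where `φ` is finite. -/
def cgfDom (θ : ℤ → ℝ) : Set ℝ := interior (finiteSet θ)

/-- `κ_j(β) = φ^{(j)}(β)`. -/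
def kappa (θ : ℤ → ℝ) (j : ℕ) (β : ℝ) : ℝ := iteratedDeriv j (cgf θ) β

/-- `μ(β) = φ'(β)`. -/
def muT (θ : ℤ → ℝ) (β : ℝ) : ℝ := deriv (cgf θ) β

/-- `σ(β) = √(φ''(β))`. -/
def sigmaT (θ : ℤ → ℝ) (β : ℝ) : ℝ := Real.sqrt (iteratedDeriv 2 (cgf θ) β)

/-- The standardized coordinate `x_n(k) = (k - μ(β) n)/(σ(β) √n)`. -/
def xnk (θ : ℤ → ℝ) (β : ℝ) (n : ℕ) (k : ℤ) : ℝ :=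
  ((k : ℝ) - muT θ β * n) / (sigmaT θ β * Real.sqrt n)

/-- The support of `θ` contains at least two points. -/
def twoPointSupport (θ : ℤ → ℝ) : Prop := ∃ k₁ k₂ : ℤ, k₁ ≠ k₂ ∧ θ k₁ ≠ 0 ∧ θ k₂ ≠ 0

/-- `θ` has lattice span 1: there is no `h ∈ {2,3,…}` and `a ∈ ℤ` such that `θ` is
concentrated on the arithmetic progression `a + hℤ`. -/
def latticeSpanOne (θ : ℤ → ℝ) : Prop :=
  ¬ ∃ (h : ℕ) (a : ℤ), 2 ≤ h ∧ ∀ k : ℤ, θ k ≠ 0 → (h : ℤ) ∣ (k - a)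

/-- `n`-fold convolution power of the measure with mass function `θ`. -/
def convPow (θ : ℤ → ℝ) : ℕ → ℤ → ℝ
  | 0, k => if k = 0 then 1 else 0
  | n + 1, k => ∑' j : ℤ, convPow θ n j * θ (k - j)

/-- The Edgeworth polynomials `P̃_j(z)`, characterized by the formal power series identity
`exp (∑_{j≥1} κ_{j+2} z^{j+2} u^j / (j+2)!) = ∑_{j≥0} P̃_j(z) u^j` in `u`; equivalently
(differentiating the identity in `u` and comparing coefficients) by `P̃_0 = 1` together with the
recursion `(j+1) P̃_{j+1}(z) = ∑_{i=0}^{j} (i+1) (κ_{i+3} z^{i+3}/(i+3)!) P̃_{j-i}(z)`. -/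
def edgeworthP (κ : ℕ → ℝ) : ℕ → Polynomial ℝ
  | 0 => 1
  | j + 1 =>
      Polynomial.C (((j : ℝ) + 1)⁻¹) *
        ∑ i ∈ Finset.range (j + 1),
          Polynomial.C (((i : ℝ) + 1) * (κ (i + 3) / (Nat.factorial (i + 3)))) *
            Polynomial.X ^ (i + 3) * edgeworthP κ (j - i)
  termination_by j => j
  decreasing_by omega

/-- Substituting the operator `-s⁻¹ d/dx` for the variable of the polynomial `P` and applying
the result to the Gaussian kernel `e^{-x²/2}` produces `(gaussianSubst s P).eval x * e^{-x²/2}`: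
indeed, since `(-d/dx)^l e^{-x²/2} = He_l(x) e^{-x²/2}` (probabilists' Hermite polynomials),
the monomial `z^l` contributes `s⁻ˡ He_l(x)`. -/
def gaussianSubst (s : ℝ) (P : Polynomial ℝ) : Polynomial ℝ :=
  ∑ l ∈ Finset.range (P.natDegree + 1),
    Polynomial.C (P.coeff l * s⁻¹ ^ l) * (Polynomial.hermite l).map (Int.castRingHom ℝ)

/-- `q_j(·;β)`, determined by `[P̃_j(-σ(β)⁻¹ d/dx; β) e^{-x²/2}](x) = q_j(x;β) e^{-x²/2}`. -/
def qpoly (θ : ℤ → ℝ) (j : ℕ) (β : ℝ) : Polynomial ℝ :=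
  gaussianSubst (sigmaT θ β) (edgeworthP (fun i => kappa θ i β) j)

/-- `Q_{m,j}(·;β)`, determined by
`[(-σ(β)⁻¹ d/dx)^m P̃_{j-m}(-σ(β)⁻¹ d/dx; β) e^{-x²/2}](x) = Q_{m,j}(x;β) e^{-x²/2}`. -/
def Qpoly (θ : ℤ → ℝ) (m j : ℕ) (β : ℝ) : Polynomial ℝ :=
  gaussianSubst (sigmaT θ β) (Polynomial.X ^ m * edgeworthP (fun i => kappa θ i β) (j - m))

/-- `f_n(s;β)`, the characteristic function of the standardized sum
`(S_n^β - nμ(β))/(σ(β)√n)` of `n` i.i.d. copies of the exponentially tilted variable `Z^β`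
with law `P[Z^β = k] = e^{βk - φ(β)} θ(k)`; by independence it equals the `n`-th power of the
characteristic function of one standardized summand.  (The formula makes sense for complex `s`.) -/
def charFn (θ : ℤ → ℝ) (n : ℕ) (s : ℂ) (β : ℝ) : ℂ :=
  (∑' k : ℤ,
      Complex.exp (Complex.I * s * ((((k : ℝ) - muT θ β) : ℝ) : ℂ) /
        (((sigmaT θ β * Real.sqrt n : ℝ)) : ℂ)) *
      ((Real.exp (β * k - cgf θ β) * θ k : ℝ) : ℂ)) ^ n

/-- `Φ(z) = ∑_{k∈ℤ} e^{zk} θ(k)`. -/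
def PhiC (θ : ℤ → ℝ) (z : ℂ) : ℂ := ∑' k : ℤ, Complex.exp (z * k) * (θ k : ℂ)

/-!
The cumulant generating function lies above its tangent at `0`,
`φ(β) ≥ φ(0) + β φ'(0)`, where `φ(0) = log ϑ(ℤ) > 0`, and above each line
`β ↦ log ϑ(k) + β k` with `k` in the support. As `φ'(0)` is the mean of the normalized measure
and the support has two points, some such `k` lies strictly above `φ'(0)` and some strictly
below. The convex combination of the tangent with one of these lines that has zero intercept
gives `φ(β) ≥ c β` for every `β`, with `c` strictly between `φ'(0)` and `k`.
-/

namespace ProbabilityTheory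

variable {Ω : Type*} [MeasurableSpace Ω] {X : Ω → ℝ} {μ : Measure Ω} {t : ℝ}

lemma cgf_zero_add_mul_le_cgf [IsFiniteMeasure μ] [NeZero μ] (hX : Integrable X μ)
    (ht : Integrable (fun ω ↦ exp (t * X ω)) μ) :
    cgf X μ 0 + t * (μ[X] / μ.real univ) ≤ cgf X μ t := by
  set m := μ[X] / μ.real univ
  have hμ : 0 < μ.real univ := measureReal_univ_pos
  have hpt : ∀ ω, exp (t * m) * (1 + t * (X ω - m)) ≤ exp (t * X ω) := fun ω ↦
    calc exp (t * m) * (1 + t * (X ω - m)) ≤ exp (t * m) * exp (t * (X ω - m)) := by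
          gcongr; linarith [add_one_le_exp (t * (X ω - m))]
      _ = exp (t * X ω) := by rw [← exp_add]; ring_nf
  have hlin : Integrable (fun ω ↦ t * (X ω - m)) μ := (hX.sub (integrable_const m)).const_mul t
  have hint : ∫ ω, exp (t * m) * (1 + t * (X ω - m)) ∂μ = exp (t * m) * μ.real univ := by
    have hmean : μ[X] = m * μ.real univ := (div_mul_cancel₀ _ hμ.ne').symm
    rw [integral_const_mul, integral_add (integrable_const 1) hlin, integral_const_mul,
      integral_sub hX (integrable_const m), hmean]
    simp [mul_comm]
  have hle : exp (t * m) * μ.real univ ≤ mgf X μ t := by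
    rw [← hint]
    exact integral_mono (((integrable_const 1).add hlin).const_mul _) ht hpt
  calc cgf X μ 0 + t * m = log (exp (t * m) * μ.real univ) := by
        rw [cgf_zero', log_mul (exp_pos _).ne' hμ.ne', log_exp]; ring
    _ ≤ cgf X μ t := log_le_log (by positivity) hle

end ProbabilityTheory

def massMeasure (θ : ℤ → ℝ) : Measure ℤ := Measure.count.withDensity fun k ↦ ENNReal.ofReal (θ k)

section massMeasure

variable {θ : ℤ → ℝ}

lemma integrable_massMeasure_iff (hθ : ∀ k, 0 ≤ θ k) {f : ℤ → ℝ} :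
    Integrable f (massMeasure θ) ↔ Summable fun k ↦ f k * θ k := by
  rw [massMeasure, integrable_withDensity_iff_integrable_smul' (by fun_prop)
    (ae_of_all _ fun _ ↦ ENNReal.ofReal_lt_top), integrable_count_iff, summable_norm_iff]
  simp_rw [ENNReal.toReal_ofReal (hθ _), smul_eq_mul, mul_comm]

lemma massMeasure_real_singleton (hθ : ∀ k, 0 ≤ θ k) (k : ℤ) :
    (massMeasure θ).real {k} = θ k := by
  simp [massMeasure, Measure.real, withDensity_apply, hθ]

lemma integral_massMeasure (hθ : ∀ k, 0 ≤ θ k) (f : ℤ → ℝ) :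
    ∫ k, f k ∂massMeasure θ = ∑' k, f k * θ k := by
  by_cases hf : Summable fun k ↦ f k * θ k
  · rw [integral_countable ((integrable_massMeasure_iff hθ).2 hf)]
    simp_rw [massMeasure_real_singleton hθ, smul_eq_mul, mul_comm]
  · rw [integral_undef (mt (integrable_massMeasure_iff hθ).1 hf), tsum_eq_zero_of_not_summable hf]

lemma massMeasure_real_univ (hθ : ∀ k, 0 ≤ θ k) : (massMeasure θ).real univ = ∑' k, θ k := by
  simpa using integral_massMeasure hθ fun _ ↦ 1

lemma isFiniteMeasure_massMeasure (hθ : ∀ k, 0 ≤ θ k) (hθs : Summable θ) :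
    IsFiniteMeasure (massMeasure θ) :=
  (integrable_const_iff_isFiniteMeasure one_ne_zero).1 <|
    (integrable_massMeasure_iff hθ).2 (by simpa using hθs)

lemma cgf_eq_cgf_massMeasure (hθ : ∀ k, 0 ≤ θ k) :
    cgf θ = ProbabilityTheory.cgf (fun k : ℤ ↦ (k : ℝ)) (massMeasure θ) := by
  ext β
  rw [cgf, ProbabilityTheory.cgf, ProbabilityTheory.mgf, integral_massMeasure hθ]

lemma finiteSet_eq_integrableExpSet (hθ : ∀ k, 0 ≤ θ k) :
    finiteSet θ = ProbabilityTheory.integrableExpSet (fun k : ℤ ↦ (k : ℝ)) (massMeasure θ) := by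
  ext β
  exact (integrable_massMeasure_iff hθ).symm

end massMeasure

section cgf

variable {θ : ℤ → ℝ}

lemma summable_mul_of_zero_mem_cgfDom (hθ : ∀ k, 0 ≤ θ k) (h0 : 0 ∈ cgfDom θ) :
    Summable fun k : ℤ ↦ (k : ℝ) * θ k := by
  rw [cgfDom, finiteSet_eq_integrableExpSet hθ] at h0
  simpa using (integrable_massMeasure_iff hθ).1
    (ProbabilityTheory.integrable_of_mem_interior_integrableExpSet h0)

lemma deriv_cgf_zero_eq (hθ : ∀ k, 0 ≤ θ k) (h0 : 0 ∈ cgfDom θ) :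
    deriv (cgf θ) 0 = (∑' k : ℤ, (k : ℝ) * θ k) / ∑' k, θ k := by
  rw [cgfDom, finiteSet_eq_integrableExpSet hθ] at h0
  rw [cgf_eq_cgf_massMeasure hθ, ProbabilityTheory.deriv_cgf_zero h0, integral_massMeasure hθ,
    massMeasure_real_univ hθ]

lemma cgf_zero_add_mul_deriv_le_cgf (hθ : ∀ k, 0 ≤ θ k) (hθs : Summable θ)
    (hpos : 0 < ∑' k, θ k) (h0 : 0 ∈ cgfDom θ) {β : ℝ} (hβ : β ∈ finiteSet θ) :
    cgf θ 0 + β * deriv (cgf θ) 0 ≤ cgf θ β := by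
  have := isFiniteMeasure_massMeasure hθ hθs
  have : NeZero (massMeasure θ) :=
    ⟨fun h ↦ by simp [← massMeasure_real_univ hθ, h] at hpos⟩
  rw [cgfDom, finiteSet_eq_integrableExpSet hθ] at h0
  rw [finiteSet_eq_integrableExpSet hθ] at hβ
  rw [cgf_eq_cgf_massMeasure hθ, ProbabilityTheory.deriv_cgf_zero h0]
  exact ProbabilityTheory.cgf_zero_add_mul_le_cgf
    (ProbabilityTheory.integrable_of_mem_interior_integrableExpSet h0) hβ

lemma log_add_mul_le_cgf (hθ : ∀ k, 0 ≤ θ k) {β : ℝ} (hβ : β ∈ finiteSet θ) {k : ℤ}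
    (hk : θ k ≠ 0) : log (θ k) + β * k ≤ cgf θ β := by
  have hle : exp (β * k) * θ k ≤ ∑' j : ℤ, exp (β * j) * θ j :=
    Summable.le_tsum hβ k fun j _ ↦ mul_nonneg (exp_pos _).le (hθ j)
  have := log_le_log (mul_pos (exp_pos _) ((hθ k).lt_of_ne' hk)) hle
  rwa [log_mul (exp_pos _).ne' hk, log_exp, add_comm] at this

end cgf

lemma exists_lt_of_tsum_mul_eq {ι : Type*} {w x : ι → ℝ} {m : ℝ} (hw : ∀ i, 0 ≤ w i)
    (hws : Summable w) (hxw : Summable fun i ↦ x i * w i)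
    (hmean : ∑' i, x i * w i = m * ∑' i, w i) {j : ι} (hj : w j ≠ 0) (hjm : x j < m) :
    ∃ i, w i ≠ 0 ∧ m < x i := by
  by_contra! hle
  have hpt : ∀ i, x i * w i ≤ m * w i := fun i ↦ by
    by_cases hi : w i = 0
    · simp [hi]
    · exact mul_le_mul_of_nonneg_right (hle i hi) (hw i)
  have hlt : x j * w j < m * w j := mul_lt_mul_of_pos_right hjm ((hw j).lt_of_ne' hj)
  have := Summable.tsum_lt_tsum hpt hlt hxw (hws.mul_left m)
  rw [tsum_mul_left, ← hmean] at this
  exact this.false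

lemma exists_gt_and_exists_lt_of_tsum_mul_eq {ι : Type*} {w x : ι → ℝ} {m : ℝ}
    (hw : ∀ i, 0 ≤ w i) (hws : Summable w) (hxw : Summable fun i ↦ x i * w i)
    (hmean : ∑' i, x i * w i = m * ∑' i, w i) {i j : ι} (hi : w i ≠ 0) (hj : w j ≠ 0)
    (hij : x i ≠ x j) :
    (∃ k, w k ≠ 0 ∧ m < x k) ∧ (∃ k, w k ≠ 0 ∧ x k < m) := by
  have hxw' : Summable fun i ↦ -x i * w i := by simpa only [neg_mul] using hxw.neg
  have hmean' : ∑' i, -x i * w i = -m * ∑' i, w i := by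
    simp_rw [neg_mul, tsum_neg, hmean]
  obtain ⟨l, hl, hlm⟩ : ∃ l, w l ≠ 0 ∧ x l ≠ m := by
    by_cases him : x i = m
    · exact ⟨j, hj, him ▸ hij.symm⟩
    · exact ⟨i, hi, him⟩
  rcases hlm.lt_or_gt with hlt | hgt
  · exact ⟨exists_lt_of_tsum_mul_eq hw hws hxw hmean hl hlt, l, hl, hlt⟩
  · obtain ⟨k, hk, hkm⟩ := exists_lt_of_tsum_mul_eq hw hws hxw' hmean' hl (neg_lt_neg hgt)
    exact ⟨⟨l, hl, hgt⟩, k, hk, neg_lt_neg_iff.1 hkm⟩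

lemma exists_pos_forall_mul_le_of_le_of_le {a b m k : ℝ} (ha : 0 < a) :
    ∃ s : ℝ, 0 < s ∧
      ∀ β y : ℝ, a + β * m ≤ y → b + β * k ≤ y → β * (m + s * (k - m)) ≤ y := by
  set b' := min b 0
  have hab : 0 < a - b' := by linarith [min_le_right b 0]
  set s := a / (a - b')
  have hs₀ : 0 < s := div_pos ha hab
  have hs₁ : s ≤ 1 := (div_le_one hab).2 (by linarith [min_le_right b 0])
  -- `s` is chosen so that the intercept of `(1 - s) (a + β m) + s (b' + β k)` vanishes.
  have hcomb : (1 - s) * a + s * b' = 0 := by simp only [s]; field_simp; ring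
  refine ⟨s, hs₀, fun β y h₁ h₂ ↦ ?_⟩
  have h₂' : b' + β * k ≤ y := by linarith [min_le_left b 0]
  nlinarith [mul_le_mul_of_nonneg_left h₁ (sub_nonneg.2 hs₁),
    mul_le_mul_of_nonneg_left h₂' hs₀.le]

/-- Values `β` with `φ(β) = +∞` contribute `+∞` (resp. `-∞`) and so do not affect the infimum
(resp. supremum); hence the claim is equivalent to the existence of `c > φ'(0)` with
`c ≤ φ(β)/β` for all `β > 0` where `φ` is finite, and symmetrically for `β < 0`. -/
theorem gamma_plus_minus_bounds
    (θ : ℤ → ℝ) (hθ0 : ∀ k, 0 ≤ θ k) (hθs : Summable θ) (hmass : 1 < ∑' k : ℤ, θ k)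
    (hsupp : twoPointSupport θ) (h0 : (0 : ℝ) ∈ cgfDom θ) :
    (∃ c : ℝ, deriv (cgf θ) 0 < c ∧
        ∀ β : ℝ, 0 < β → β ∈ finiteSet θ → c ≤ cgf θ β / β) ∧
    (∃ c : ℝ, c < deriv (cgf θ) 0 ∧
        ∀ β : ℝ, β < 0 → β ∈ finiteSet θ → cgf θ β / β ≤ c) := by
  set m := deriv (cgf θ) 0
  have hM : 0 < ∑' k, θ k := one_pos.trans hmass
  have hcgf0 : 0 < cgf θ 0 := by simpa [cgf] using log_pos hmass
  have htangent : ∀ β ∈ finiteSet θ, cgf θ 0 + β * m ≤ cgf θ β := fun _ hβ ↦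
    cgf_zero_add_mul_deriv_le_cgf hθ0 hθs hM h0 hβ
  have hmean : ∑' k : ℤ, (k : ℝ) * θ k = m * ∑' k, θ k := by
    rw [show m = _ from deriv_cgf_zero_eq hθ0 h0, div_mul_cancel₀ _ hM.ne']
  obtain ⟨k₁, k₂, hne, h₁, h₂⟩ := hsupp
  obtain ⟨⟨kHi, hkHi, hmHi⟩, ⟨kLo, hkLo, hmLo⟩⟩ := exists_gt_and_exists_lt_of_tsum_mul_eq hθ0 hθs
    (summable_mul_of_zero_mem_cgfDom hθ0 h0) hmean h₁ h₂ (Int.cast_injective.ne hne)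
  obtain ⟨sHi, hsHi, hHi⟩ := exists_pos_forall_mul_le_of_le_of_le hcgf0 (m := m) (k := kHi)
    (b := log (θ kHi))
  obtain ⟨sLo, hsLo, hLo⟩ := exists_pos_forall_mul_le_of_le_of_le hcgf0 (m := m) (k := kLo)
    (b := log (θ kLo))
  refine ⟨⟨m + sHi * (kHi - m), lt_add_of_pos_right m (mul_pos hsHi (sub_pos.2 hmHi)),
    fun β hβ hfin ↦ ?_⟩, ⟨m + sLo * (kLo - m), add_lt_of_neg_right m
    (mul_neg_of_pos_of_neg hsLo (sub_neg.2 hmLo)), fun β hβ hfin ↦ ?_⟩⟩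
  · rw [le_div_iff₀ hβ, mul_comm]
    exact hHi β _ (htangent β hfin) (log_add_mul_le_cgf hθ0 hfin hkHi)
  · rw [div_le_iff_of_neg hβ, mul_comm]
    exact hLo β _ (htangent β hfin) (log_add_mul_le_cgf hθ0 hfin hkLo)

end
end

section
/- Assume the support of ϑ contains at least two points and fix r ∈ ℕ₀ and a compact set K ⊂ 𝒟_φ. Then there exists a > 0 such that lim_{n→∞} n^{r/2} sup_{β∈K} ∫_{{s ∈ ℝ : n^{1/7} ≤ |s| ≤ a√n}} |f_n(s;β)| ds = 0. -/
open Real Filter Topology MeasureTheory Metric Set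

noncomputable section

/-!
Since `θ` charges two integers `k₁ ≠ k₂`, the characteristic function of the tilted law obeys
`|E e^{itZ^β}| ≤ 1 - p₁ p₂ (1 - cos (t (k₂ - k₁)))` with `pᵢ = P[Z^β = kᵢ]`, and for
`|t (k₂ - k₁)| ≤ π` this is at most `exp (-(2/π²) p₁ p₂ (t (k₂ - k₁))²)`. On the compact set `K`
both `σ(β)` and `p₁ p₂` are bounded away from `0` and `∞` (`σ²(β) = φ''(β)` is the variance of
`Z^β`, positive and continuous on `𝒟_φ`), so with `t = s / (σ(β) √n)` one gets
`|f_n(s; β)| ≤ exp (-c s²)` for `|s| ≤ a √n`, uniformly in `β ∈ K`. The integral over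
`|s| ≥ n^{1/7}` is then `O(exp (-c n^{2/7} / 2))`, which beats every power of `n`.
-/

open scoped Nat

def expMoment (θ : ℤ → ℝ) (j : ℕ) (β : ℝ) : ℝ := ∑' k : ℤ, (k : ℝ) ^ j * Real.exp (β * k) * θ k

lemma cgf_eq_log_expMoment (θ : ℤ → ℝ) : cgf θ = fun β => Real.log (expMoment θ 0 β) := by
  ext β; simp [cgf, expMoment]

lemma pow_le_factorial_div_pow_mul_exp {ε x : ℝ} (hε : 0 < ε) (hx : 0 ≤ x) (j : ℕ) :
    x ^ j ≤ j ! / ε ^ j * Real.exp (ε * x) := by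
  have h := Real.pow_div_factorial_le_exp _ (mul_nonneg hε.le hx) j
  rw [mul_pow, div_le_iff₀ (by positivity)] at h
  rw [div_mul_eq_mul_div, le_div_iff₀ (by positivity)]
  linarith

lemma abs_pow_mul_exp_le {ε l u β : ℝ} (hε : 0 < ε) (hβ : β ∈ Icc (l + ε) (u - ε)) (j : ℕ)
    (x : ℝ) : |x| ^ j * Real.exp (β * x) ≤ j ! / ε ^ j * (Real.exp (l * x) + Real.exp (u * x)) := by
  have hexp : Real.exp (ε * |x| + β * x) ≤ Real.exp (l * x) + Real.exp (u * x) := by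
    rcases le_or_gt 0 x with hx | hx
    · refine (Real.exp_le_exp.2 ?_).trans (le_add_of_nonneg_left (Real.exp_pos _).le)
      rw [abs_of_nonneg hx]
      nlinarith [hβ.2]
    · refine (Real.exp_le_exp.2 ?_).trans (le_add_of_nonneg_right (Real.exp_pos _).le)
      rw [abs_of_neg hx]
      nlinarith [hβ.1]
  calc |x| ^ j * Real.exp (β * x)
      ≤ j ! / ε ^ j * Real.exp (ε * |x|) * Real.exp (β * x) := by
        gcongr; exact pow_le_factorial_div_pow_mul_exp hε (abs_nonneg x) j
    _ = j ! / ε ^ j * Real.exp (ε * |x| + β * x) := by rw [Real.exp_add]; ring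
    _ ≤ _ := by gcongr

lemma exists_pos_mem_Ioo_add_sub {l u β : ℝ} (hβ : β ∈ Ioo l u) :
    ∃ ε > 0, β ∈ Ioo (l + ε) (u - ε) := by
  refine ⟨min (β - l) (u - β) / 2, half_pos (lt_min (sub_pos.2 hβ.1) (sub_pos.2 hβ.2)), ?_, ?_⟩ <;>
  linarith [min_le_left (β - l) (u - β), min_le_right (β - l) (u - β), hβ.1, hβ.2]

section ExpMoment

variable {θ : ℤ → ℝ} (hθ0 : ∀ k, 0 ≤ θ k) {l u : ℝ}

lemma summable_exp_add_exp_mul (hl : l ∈ finiteSet θ) (hu : u ∈ finiteSet θ) :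
    Summable fun k : ℤ => (Real.exp (l * k) + Real.exp (u * k)) * θ k := by
  simpa only [add_mul] using hl.add hu

include hθ0 in
lemma norm_pow_mul_exp_mul_le {ε β : ℝ} (hε : 0 < ε) (hβ : β ∈ Icc (l + ε) (u - ε)) (j : ℕ)
    (k : ℤ) :
    ‖(k : ℝ) ^ j * Real.exp (β * k) * θ k‖
      ≤ j ! / ε ^ j * ((Real.exp (l * k) + Real.exp (u * k)) * θ k) := by
  rw [norm_mul, norm_mul, norm_pow, Real.norm_eq_abs, Real.norm_of_nonneg (Real.exp_pos _).le,
    Real.norm_of_nonneg (hθ0 k), ← mul_assoc]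
  exact mul_le_mul_of_nonneg_right (abs_pow_mul_exp_le hε hβ j k) (hθ0 k)

variable (hl : l ∈ finiteSet θ) (hu : u ∈ finiteSet θ)
include hθ0 hl hu

lemma summable_pow_mul_exp_mul {β : ℝ} (hβ : β ∈ Ioo l u) (j : ℕ) :
    Summable fun k : ℤ => (k : ℝ) ^ j * Real.exp (β * k) * θ k := by
  obtain ⟨ε, hε, hβε⟩ := exists_pos_mem_Ioo_add_sub hβ
  exact .of_norm_bounded ((summable_exp_add_exp_mul hl hu).mul_left _)
    (norm_pow_mul_exp_mul_le hθ0 hε (Ioo_subset_Icc_self hβε) j)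

lemma hasDerivAt_expMoment {β : ℝ} (hβ : β ∈ Ioo l u) (j : ℕ) :
    HasDerivAt (expMoment θ j) (expMoment θ (j + 1) β) β := by
  obtain ⟨ε, hε, hβε⟩ := exists_pos_mem_Ioo_add_sub hβ
  refine hasDerivAt_tsum_of_isPreconnected ((summable_exp_add_exp_mul hl hu).mul_left _)
    isOpen_Ioo isPreconnected_Ioo (fun k y _ => ?_)
    (fun k y hy => norm_pow_mul_exp_mul_le hθ0 hε (Ioo_subset_Icc_self hy) (j + 1) k) hβε
    (summable_pow_mul_exp_mul hθ0 hl hu hβ j) hβε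
  exact ((((hasDerivAt_mul_const (k : ℝ)).exp).const_mul ((k : ℝ) ^ j)).mul_const (θ k)).congr_deriv
    (by ring)

lemma continuousOn_expMoment (j : ℕ) : ContinuousOn (expMoment θ j) (Ioo l u) :=
  fun _ hβ => (hasDerivAt_expMoment hθ0 hl hu hβ j).continuousAt.continuousWithinAt

lemma expMoment_zero_pos {β : ℝ} (hβ : β ∈ Ioo l u) {k₀ : ℤ} (hk₀ : θ k₀ ≠ 0) :
    0 < expMoment θ 0 β :=
  (summable_pow_mul_exp_mul hθ0 hl hu hβ 0).tsum_pos
    (fun k => mul_nonneg (by positivity) (hθ0 k)) k₀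
    (by simpa using mul_pos (Real.exp_pos _) ((hθ0 k₀).lt_of_ne' hk₀))

lemma hasDerivAt_cgf {β : ℝ} (hβ : β ∈ Ioo l u) {k₀ : ℤ} (hk₀ : θ k₀ ≠ 0) :
    HasDerivAt (cgf θ) (expMoment θ 1 β / expMoment θ 0 β) β := by
  rw [cgf_eq_log_expMoment θ]
  exact (hasDerivAt_expMoment hθ0 hl hu hβ 0).log (expMoment_zero_pos hθ0 hl hu hβ hk₀).ne'

lemma iteratedDeriv_two_cgf {β : ℝ} (hβ : β ∈ Ioo l u) {k₀ : ℤ} (hk₀ : θ k₀ ≠ 0) :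
    iteratedDeriv 2 (cgf θ) β =
      (expMoment θ 2 β * expMoment θ 0 β - expMoment θ 1 β ^ 2) / expMoment θ 0 β ^ 2 := by
  have hderiv : deriv (cgf θ) =ᶠ[𝓝 β] fun y => expMoment θ 1 y / expMoment θ 0 y :=
    eventually_of_mem (isOpen_Ioo.mem_nhds hβ) fun y hy => (hasDerivAt_cgf hθ0 hl hu hy hk₀).deriv
  rw [iteratedDeriv_succ, iteratedDeriv_one, hderiv.deriv_eq]
  exact ((hasDerivAt_expMoment hθ0 hl hu hβ 1).div (hasDerivAt_expMoment hθ0 hl hu hβ 0)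
    (expMoment_zero_pos hθ0 hl hu hβ hk₀).ne').deriv.trans (by ring)

/-- The expansion of `∑ (k - m)² e^{βk} θ(k)`, positive because `θ` charges two points. -/
lemma expMoment_two_sub_add_pos (hsupp : twoPointSupport θ) {β : ℝ} (hβ : β ∈ Ioo l u)
    (m : ℝ) : 0 < expMoment θ 2 β - 2 * m * expMoment θ 1 β + m ^ 2 * expMoment θ 0 β := by
  have hsum : HasSum (fun k : ℤ => ((k : ℝ) - m) ^ 2 * (Real.exp (β * k) * θ k))
      (expMoment θ 2 β - 2 * m * expMoment θ 1 β + m ^ 2 * expMoment θ 0 β) := by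
    have h := fun j => (summable_pow_mul_exp_mul hθ0 hl hu hβ j).hasSum
    exact (((h 2).sub ((h 1).mul_left (2 * m))).add ((h 0).mul_left (m ^ 2))).congr_fun
      fun k => by ring
  obtain ⟨k₁, k₂, hk, h₁, h₂⟩ := hsupp
  obtain ⟨k, hk0, hkm⟩ : ∃ k, θ k ≠ 0 ∧ (k : ℝ) ≠ m := by
    by_contra! h
    exact hk (by exact_mod_cast (h k₁ h₁).trans (h k₂ h₂).symm)
  rw [← hsum.tsum_eq]
  exact hsum.summable.tsum_pos
    (fun k => mul_nonneg (sq_nonneg _) (mul_nonneg (Real.exp_pos _).le (hθ0 k))) k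
    (mul_pos (sq_pos_of_ne_zero (sub_ne_zero.2 hkm))
      (mul_pos (Real.exp_pos _) ((hθ0 k).lt_of_ne' hk0)))

lemma expMoment_variance_pos (hsupp : twoPointSupport θ) {β : ℝ} (hβ : β ∈ Ioo l u) :
    0 < expMoment θ 2 β * expMoment θ 0 β - expMoment θ 1 β ^ 2 := by
  obtain ⟨k₀, -, -, hk₀, -⟩ := id hsupp
  have h0 := expMoment_zero_pos hθ0 hl hu hβ hk₀
  refine (mul_pos h0 (expMoment_two_sub_add_pos hθ0 hl hu hsupp hβ
    (expMoment θ 1 β / expMoment θ 0 β))).trans_eq ?_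
  field_simp
  ring

lemma sigmaT_eq {β : ℝ} (hβ : β ∈ Ioo l u) {k₀ : ℤ} (hk₀ : θ k₀ ≠ 0) :
    sigmaT θ β =
      √((expMoment θ 2 β * expMoment θ 0 β - expMoment θ 1 β ^ 2) / expMoment θ 0 β ^ 2) := by
  rw [sigmaT, iteratedDeriv_two_cgf hθ0 hl hu hβ hk₀]

lemma sigmaT_pos (hsupp : twoPointSupport θ) {β : ℝ} (hβ : β ∈ Ioo l u) : 0 < sigmaT θ β := by
  obtain ⟨k₀, -, -, hk₀, -⟩ := id hsupp
  rw [sigmaT_eq hθ0 hl hu hβ hk₀]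
  exact Real.sqrt_pos.2 (div_pos (expMoment_variance_pos hθ0 hl hu hsupp hβ)
    (pow_pos (expMoment_zero_pos hθ0 hl hu hβ hk₀) 2))

lemma continuousOn_sigmaT {k₀ : ℤ} (hk₀ : θ k₀ ≠ 0) : ContinuousOn (sigmaT θ) (Ioo l u) := by
  have hc := continuousOn_expMoment hθ0 hl hu
  refine ContinuousOn.congr ?_ fun β hβ => sigmaT_eq hθ0 hl hu hβ hk₀
  exact (((hc 2).mul (hc 0)).sub ((hc 1).pow 2)).div ((hc 0).pow 2)
    (fun β hβ => pow_ne_zero 2 (expMoment_zero_pos hθ0 hl hu hβ hk₀).ne') |>.sqrt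

end ExpMoment

/-- `P[Z^β = k]`. -/
def tiltedMass (θ : ℤ → ℝ) (β : ℝ) (k : ℤ) : ℝ := Real.exp (β * k - cgf θ β) * θ k

section TiltedMass

variable {θ : ℤ → ℝ} (hθ0 : ∀ k, 0 ≤ θ k) {l u : ℝ} (hl : l ∈ finiteSet θ)
  (hu : u ∈ finiteSet θ) {k₀ : ℤ} (hk₀ : θ k₀ ≠ 0)
include hθ0 hl hu hk₀

lemma hasSum_tiltedMass {β : ℝ} (hβ : β ∈ Ioo l u) : HasSum (tiltedMass θ β) 1 := by
  have h0 := expMoment_zero_pos hθ0 hl hu hβ hk₀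
  have h := (summable_pow_mul_exp_mul hθ0 hl hu hβ 0).hasSum.div_const (expMoment θ 0 β)
  rw [← expMoment, div_self h0.ne'] at h
  refine h.congr_fun fun k => ?_
  rw [tiltedMass, Real.exp_sub, cgf_eq_log_expMoment θ, Real.exp_log h0]
  ring

lemma continuousOn_tiltedMass (k : ℤ) : ContinuousOn (fun β => tiltedMass θ β k) (Ioo l u) := by
  have hcgf : ContinuousOn (cgf θ) (Ioo l u) := fun β hβ =>
    (hasDerivAt_cgf hθ0 hl hu hβ hk₀).continuousAt.continuousWithinAt
  exact ((continuousOn_id.mul continuousOn_const).sub hcgf).rexp.mul continuousOn_const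

end TiltedMass

lemma norm_ofReal_add_exp_mul_I_mul_le {p₁ p₂ : ℝ} (h₁ : 0 ≤ p₁) (h₂ : 0 ≤ p₂) (h : p₁ + p₂ ≤ 1)
    (x : ℝ) :
    ‖(p₁ : ℂ) + Complex.exp (x * Complex.I) * p₂‖ ≤ p₁ + p₂ - p₁ * p₂ * (1 - Real.cos x) := by
  have hc : 0 ≤ 1 - Real.cos x := by linarith [Real.cos_le_one x]
  have hc₂ : 1 - Real.cos x ≤ 2 := by linarith [Real.neg_one_le_cos x]
  have hsq : ‖(p₁ : ℂ) + Complex.exp (x * Complex.I) * p₂‖ ^ 2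
      = (p₁ + p₂) ^ 2 - 2 * p₁ * p₂ * (1 - Real.cos x) := by
    rw [Complex.sq_norm, Complex.exp_mul_I]
    simp [Complex.normSq_apply, Complex.cos_ofReal_re, Complex.sin_ofReal_re]
    linear_combination p₂ ^ 2 * Real.sin_sq_add_cos_sq x
  have hrhs : 0 ≤ p₁ + p₂ - p₁ * p₂ * (1 - Real.cos x) := by
    nlinarith [mul_le_mul_of_nonneg_left hc₂ (mul_nonneg h₁ h₂),
      mul_nonneg h₁ (by linarith : 0 ≤ 1 - p₂), mul_nonneg h₂ (by linarith : 0 ≤ 1 - p₁)]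
  rw [← sq_le_sq₀ (norm_nonneg _) hrhs, hsq]
  nlinarith [mul_nonneg (mul_nonneg (mul_nonneg h₁ h₂) hc) (by linarith : 0 ≤ 1 - (p₁ + p₂)),
    sq_nonneg (p₁ * p₂ * (1 - Real.cos x))]

/-- The mass outside `{k₁, k₂}` contributes at most its total; the two atoms `k₁, k₂` lose
`q k₁ q k₂ (1 - cos (t (k₂ - k₁)))` through their phase difference. -/
lemma norm_tsum_exp_mul_I_le {q : ℤ → ℝ} (hq0 : ∀ k, 0 ≤ q k) (hq : HasSum q 1) {k₁ k₂ : ℤ}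
    (hk : k₁ ≠ k₂) (t : ℝ) :
    ‖∑' k : ℤ, Complex.exp (↑(t * k) * Complex.I) * q k‖
      ≤ 1 - q k₁ * q k₂ * (1 - Real.cos (t * (k₂ - k₁))) := by
  set e : ℤ → ℂ := fun k => Complex.exp (↑(t * k) * Complex.I) * q k
  have hnorm : ∀ k, ‖e k‖ = q k := fun k => by
    simp only [e, norm_mul, Complex.norm_exp_ofReal_mul_I, one_mul, Complex.norm_real,
      Real.norm_of_nonneg (hq0 k)]
  have he : Summable e := .of_norm (by simpa only [hnorm] using hq.summable)
  set F : Finset ℤ := {k₁, k₂}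
  have hqF : ∑ k ∈ F, q k + ∑' k : ↑(F : Set ℤ)ᶜ, q k = 1 :=
    (hq.summable.sum_add_tsum_compl).trans hq.tsum_eq
  rw [Finset.sum_pair hk] at hqF
  have hrest : ‖∑' k : ↑(F : Set ℤ)ᶜ, e k‖ ≤ 1 - (q k₁ + q k₂) := by
    calc ‖∑' k : ↑(F : Set ℤ)ᶜ, e k‖ ≤ ∑' k : ↑(F : Set ℤ)ᶜ, ‖e k‖ :=
          norm_tsum_le_tsum_norm (he.subtype _).norm
      _ = ∑' k : ↑(F : Set ℤ)ᶜ, q k := tsum_congr fun k => hnorm k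
      _ = 1 - (q k₁ + q k₂) := by linarith
  have hpair : e k₁ + e k₂ = Complex.exp (↑(t * k₁) * Complex.I) *
      ((q k₁ : ℂ) + Complex.exp (↑(t * (k₂ - k₁)) * Complex.I) * q k₂) := by
    simp only [e]
    rw [mul_add, ← mul_assoc, ← Complex.exp_add]
    congr 3
    push_cast
    ring
  have hq₁₂ : q k₁ + q k₂ ≤ 1 := by
    linarith [tsum_nonneg (L := .unconditional _) fun k : ↑(F : Set ℤ)ᶜ => hq0 k]
  rw [← he.sum_add_tsum_compl (s := F), Finset.sum_pair hk, hpair]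
  calc _ ≤ _ := norm_add_le _ _
    _ ≤ (q k₁ + q k₂ - q k₁ * q k₂ * (1 - Real.cos (t * (k₂ - k₁)))) + (1 - (q k₁ + q k₂)) := by
        rw [norm_mul, Complex.norm_exp_ofReal_mul_I, one_mul]
        exact add_le_add (norm_ofReal_add_exp_mul_I_mul_le (hq0 k₁) (hq0 k₂) hq₁₂ _) hrest
    _ = _ := by ring

lemma norm_tsum_exp_mul_I_le_exp {q : ℤ → ℝ} (hq0 : ∀ k, 0 ≤ q k) (hq : HasSum q 1) {k₁ k₂ : ℤ}
    (hk : k₁ ≠ k₂) {t : ℝ} (ht : |t * (k₂ - k₁)| ≤ π) :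
    ‖∑' k : ℤ, Complex.exp (↑(t * k) * Complex.I) * q k‖
      ≤ Real.exp (-(2 / π ^ 2 * (q k₁ * q k₂) * (t * (k₂ - k₁)) ^ 2)) := by
  have hcos := Real.cos_le_one_sub_mul_cos_sq ht
  have hq₁₂ := mul_nonneg (hq0 k₁) (hq0 k₂)
  calc _ ≤ 1 - q k₁ * q k₂ * (1 - Real.cos (t * (k₂ - k₁))) := norm_tsum_exp_mul_I_le hq0 hq hk t
    _ ≤ 1 + -(2 / π ^ 2 * (q k₁ * q k₂) * (t * (k₂ - k₁)) ^ 2) := by nlinarith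
    _ ≤ _ := Real.add_one_le_exp _ |>.trans_eq' (add_comm _ _)

/-- Centring by `μ(β)` only changes the phase. -/
lemma norm_charFn_eq (θ : ℤ → ℝ) (n : ℕ) (s β : ℝ) :
    ‖charFn θ n s β‖ = ‖∑' k : ℤ, Complex.exp (↑(s / (sigmaT θ β * √n) * k) * Complex.I)
      * tiltedMass θ β k‖ ^ n := by
  set t := s / (sigmaT θ β * √n)
  have hterm : ∀ k : ℤ,
      Complex.exp (Complex.I * s * ((((k : ℝ) - muT θ β) : ℝ) : ℂ) / ((sigmaT θ β * √n : ℝ) : ℂ))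
        * ((Real.exp (β * k - cgf θ β) * θ k : ℝ) : ℂ)
      = Complex.exp (↑(t * k) * Complex.I) * tiltedMass θ β k
        * Complex.exp (↑(-(t * muT θ β)) * Complex.I) := fun k => by
    rw [mul_right_comm (Complex.exp _) (tiltedMass θ β k : ℂ), ← Complex.exp_add, tiltedMass]
    congr 2
    simp only [t]
    push_cast
    ring
  rw [charFn, norm_pow, tsum_congr hterm, tsum_mul_right, norm_mul,
    Complex.norm_exp_ofReal_mul_I, mul_one]

lemma norm_charFn_le_exp {θ : ℤ → ℝ} (hθ0 : ∀ k, 0 ≤ θ k) {l u : ℝ} (hl : l ∈ finiteSet θ)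
    (hu : u ∈ finiteSet θ) (hsupp : twoPointSupport θ) {β : ℝ} (hβ : β ∈ Ioo l u) {k₁ k₂ : ℤ}
    (hk : k₁ ≠ k₂) {n : ℕ} (hn : 0 < n) {s : ℝ} (hs : |s * (k₂ - k₁)| ≤ π * sigmaT θ β * √n) :
    ‖charFn θ n s β‖ ≤ Real.exp (-(2 / π ^ 2 * (tiltedMass θ β k₁ * tiltedMass θ β k₂)
      * (k₂ - k₁) ^ 2 / sigmaT θ β ^ 2 * s ^ 2)) := by
  obtain ⟨k₀, -, -, hk₀, -⟩ := id hsupp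
  have hσn : 0 < sigmaT θ β * √n :=
    mul_pos (sigmaT_pos hθ0 hl hu hsupp hβ) (Real.sqrt_pos.2 (Nat.cast_pos.2 hn))
  set t := s / (sigmaT θ β * √n)
  have ht : |t * (k₂ - k₁)| ≤ π := by
    rw [div_mul_eq_mul_div, abs_div, abs_of_pos hσn, div_le_iff₀ hσn, ← mul_assoc]
    exact hs
  have hnt : (n : ℝ) * t ^ 2 = s ^ 2 / sigmaT θ β ^ 2 := by
    simp only [t]
    rw [div_pow, mul_pow, Real.sq_sqrt (Nat.cast_nonneg n)]
    field_simp
  rw [norm_charFn_eq]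
  calc _ ≤ Real.exp (-(2 / π ^ 2 * (tiltedMass θ β k₁ * tiltedMass θ β k₂)
          * (t * (k₂ - k₁)) ^ 2)) ^ n :=
        pow_le_pow_left₀ (norm_nonneg _) (norm_tsum_exp_mul_I_le_exp
          (fun k => mul_nonneg (Real.exp_pos _).le (hθ0 k))
          (hasSum_tiltedMass hθ0 hl hu hk₀ hβ) hk ht) n
    _ = _ := by
        rw [← Real.exp_nat_mul]
        congr 1
        linear_combination (-(2 / π ^ 2 * (tiltedMass θ β k₁ * tiltedMass θ β k₂)
          * (k₂ - k₁ : ℝ) ^ 2)) * hnt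

lemma IsCompact.exists_pos_le_le_of_continuousOn {α : Type*} [TopologicalSpace α] {K : Set α}
    (hK : IsCompact K) {f : α → ℝ} (hf : ContinuousOn f K) (hpos : ∀ x ∈ K, 0 < f x) :
    ∃ m M, 0 < m ∧ m ≤ M ∧ ∀ x ∈ K, m ≤ f x ∧ f x ≤ M := by
  rcases K.eq_empty_or_nonempty with rfl | hne
  · exact ⟨1, 1, one_pos, le_rfl, by simp⟩
  obtain ⟨x₀, hx₀, hmin⟩ := hK.exists_isMinOn hne hf
  obtain ⟨x₁, hx₁, hmax⟩ := hK.exists_isMaxOn hne hf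
  exact ⟨f x₀, f x₁, hpos x₀ hx₀, hmin hx₁, fun x hx => ⟨hmin hx, hmax hx⟩⟩

lemma exists_norm_charFn_le_exp_neg_mul_sq {θ : ℤ → ℝ} (hθ0 : ∀ k, 0 ≤ θ k) {l u : ℝ}
    (hl : l ∈ finiteSet θ) (hu : u ∈ finiteSet θ) (hsupp : twoPointSupport θ) {K : Set ℝ}
    (hK : IsCompact K) (hKlu : K ⊆ Ioo l u) :
    ∃ a > 0, ∃ c > 0, ∀ n : ℕ, 0 < n → ∀ β ∈ K, ∀ s : ℝ, |s| ≤ a * √n →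
      ‖charFn θ n s β‖ ≤ Real.exp (-(c * s ^ 2)) := by
  obtain ⟨k₁, k₂, hk, h₁, h₂⟩ := id hsupp
  obtain ⟨σ₀, σ₁, hσ₀, hσ₀₁, hσ⟩ := hK.exists_pos_le_le_of_continuousOn
    ((continuousOn_sigmaT hθ0 hl hu h₁).mono hKlu) fun β hβ => sigmaT_pos hθ0 hl hu hsupp (hKlu hβ)
  obtain ⟨c₀, _, hc₀, _, hc₀le⟩ := hK.exists_pos_le_le_of_continuousOn
    (((continuousOn_tiltedMass hθ0 hl hu h₁ k₁).mul
      (continuousOn_tiltedMass hθ0 hl hu h₁ k₂)).mono hKlu) fun β _ =>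
    mul_pos (mul_pos (Real.exp_pos _) ((hθ0 k₁).lt_of_ne' h₁))
      (mul_pos (Real.exp_pos _) ((hθ0 k₂).lt_of_ne' h₂))
  have hd : (k₂ - k₁ : ℝ) ≠ 0 := sub_ne_zero.2 (by exact_mod_cast hk.symm)
  refine ⟨π * σ₀ / |(k₂ - k₁ : ℝ)|, div_pos (mul_pos pi_pos hσ₀) (abs_pos.2 hd),
    2 / π ^ 2 * c₀ * (k₂ - k₁ : ℝ) ^ 2 / σ₁ ^ 2, div_pos (mul_pos (mul_pos (by positivity) hc₀)
      (sq_pos_of_ne_zero hd)) (pow_pos (hσ₀.trans_le hσ₀₁) 2), fun n hn β hβ s hs => ?_⟩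
  obtain ⟨hσβ₀, hσβ₁⟩ := hσ β hβ
  refine (norm_charFn_le_exp hθ0 hl hu hsupp (hKlu hβ) hk hn ?_).trans (Real.exp_le_exp.2 ?_)
  · rw [abs_mul]
    calc |s| * |(k₂ - k₁ : ℝ)| ≤ π * σ₀ / |(k₂ - k₁ : ℝ)| * √n * |(k₂ - k₁ : ℝ)| := by gcongr
      _ = π * σ₀ * √n := by field_simp
      _ ≤ π * sigmaT θ β * √n := by gcongr
  · have hq : c₀ ≤ tiltedMass θ β k₁ * tiltedMass θ β k₂ := (hc₀le β hβ).1
    have := sigmaT_pos hθ0 hl hu hsupp (hKlu hβ)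
    rw [neg_le_neg_iff]
    gcongr
    exact mul_nonneg (mul_nonneg (by positivity) (hc₀.le.trans hq)) (sq_nonneg _)

lemma setIntegral_le_of_le_exp_neg_mul_sq {f : ℝ → ℝ} {S : Set ℝ} {A c : ℝ} (hc : 0 < c)
    (hS : MeasurableSet S) (hf0 : ∀ s, 0 ≤ f s) (hA0 : 0 ≤ A) (hA : ∀ s ∈ S, A ≤ |s|)
    (hf : ∀ s ∈ S, f s ≤ Real.exp (-(c * s ^ 2))) :
    ∫ s in S, f s ≤ Real.exp (-(c / 2) * A ^ 2) * √(π / (c / 2)) := by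
  have hg : Integrable fun s : ℝ => Real.exp (-(c / 2) * A ^ 2) * Real.exp (-(c / 2) * s ^ 2) :=
    (integrable_exp_neg_mul_sq (half_pos hc)).const_mul _
  calc ∫ s in S, f s
      ≤ ∫ s in S, Real.exp (-(c / 2) * A ^ 2) * Real.exp (-(c / 2) * s ^ 2) := by
        refine integral_mono_of_nonneg (.of_forall hf0) hg.integrableOn
          ((ae_restrict_iff' hS).2 (.of_forall fun s hs => (hf s hs).trans ?_))
        have hAs : A ^ 2 ≤ s ^ 2 := sq_abs s ▸ pow_le_pow_left₀ hA0 (hA s hs) 2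
        dsimp only
        rw [← Real.exp_add]
        exact Real.exp_le_exp.2 (by nlinarith)
    _ ≤ ∫ s, Real.exp (-(c / 2) * A ^ 2) * Real.exp (-(c / 2) * s ^ 2) :=
        setIntegral_le_integral hg (.of_forall fun s => by positivity)
    _ = _ := by rw [integral_const_mul, integral_gaussian]

lemma tendsto_rpow_mul_exp_neg_mul_rpow_atTop_nhds_zero (p : ℝ) {γ b : ℝ} (hγ : 0 < γ)
    (hb : 0 < b) : Tendsto (fun x : ℝ => x ^ p * Real.exp (-b * x ^ γ)) atTop (𝓝 0) := by
  refine ((tendsto_rpow_mul_exp_neg_mul_atTop_nhds_zero (p / γ) b hb).comp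
    (tendsto_rpow_atTop hγ)).congr' ?_
  filter_upwards [eventually_ge_atTop 0] with x hx
  rw [Function.comp_apply, ← Real.rpow_mul hx, mul_div_cancel₀ _ hγ.ne']

lemma IsCompact.exists_Ioo_superset_of_subset_interior {S K : Set ℝ} (hK : IsCompact K)
    (hKne : K.Nonempty) (hKS : K ⊆ interior S) : ∃ l u, l ∈ S ∧ u ∈ S ∧ K ⊆ Ioo l u := by
  obtain ⟨δ, hδ, hδS⟩ := hK.exists_cthickening_subset_open isOpen_interior hKS
  have hmem : ∀ b ∈ K, ∀ x, |x - b| ≤ δ → x ∈ S := fun b hb x hx =>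
    interior_subset (hδS (mem_cthickening_of_dist_le x b δ K hb (by rwa [Real.dist_eq])))
  obtain ⟨b₁, hb₁K, hb₁⟩ := hK.exists_isLeast hKne
  obtain ⟨b₂, hb₂K, hb₂⟩ := hK.exists_isGreatest hKne
  refine ⟨b₁ - δ, b₂ + δ, hmem b₁ hb₁K _ ?_, hmem b₂ hb₂K _ ?_,
    fun β hβ => ⟨by linarith [hb₁ hβ], by linarith [hb₂ hβ]⟩⟩ <;>
  simp [abs_of_pos hδ]

theorem charFn_middle_range_integral_bound_general
    (θ : ℤ → ℝ) (hθ0 : ∀ k, 0 ≤ θ k)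
    (hsupp : twoPointSupport θ)
    (r : ℕ) (K : Set ℝ) (hK : IsCompact K) (hKD : K ⊆ cgfDom θ) :
    ∃ a : ℝ, 0 < a ∧ ∀ ε > 0, ∃ N : ℕ, ∀ n ≥ N, ∀ β ∈ K,
      (n : ℝ) ^ ((r : ℝ) / 2) *
        ∫ s in {s : ℝ | (n : ℝ) ^ ((1 : ℝ) / 7) ≤ |s| ∧ |s| ≤ a * Real.sqrt n},
          ‖charFn θ n (s : ℂ) β‖ < ε := by
  rcases K.eq_empty_or_nonempty with rfl | hKne
  · exact ⟨1, one_pos, fun ε _ => ⟨0, by simp⟩⟩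
  obtain ⟨l, u, hl, hu, hKlu⟩ := hK.exists_Ioo_superset_of_subset_interior hKne hKD
  obtain ⟨a, ha, c, hc, hbound⟩ := exists_norm_charFn_le_exp_neg_mul_sq hθ0 hl hu hsupp hK hKlu
  refine ⟨a, ha, fun ε hε => ?_⟩
  have hlim := ((tendsto_rpow_mul_exp_neg_mul_rpow_atTop_nhds_zero (r / 2)
    (by norm_num : (0 : ℝ) < 2 / 7) (half_pos hc)).comp tendsto_natCast_atTop_atTop).mul_const
    √(π / (c / 2))
  rw [zero_mul] at hlim
  obtain ⟨N, hN⟩ := eventually_atTop.1 (hlim.eventually_lt_const hε)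
  refine ⟨max N 1, fun n hn β hβ => lt_of_le_of_lt ?_ (hN n (le_of_max_le_left hn))⟩
  have hA : ((n : ℝ) ^ ((1 : ℝ) / 7)) ^ 2 = (n : ℝ) ^ ((2 : ℝ) / 7) := by
    rw [← Real.rpow_natCast, ← Real.rpow_mul (Nat.cast_nonneg n)]
    norm_num
  rw [Function.comp_apply, mul_assoc, ← hA]
  gcongr
  exact setIntegral_le_of_le_exp_neg_mul_sq hc
    ((measurableSet_le measurable_const continuous_abs.measurable).inter
      (measurableSet_le continuous_abs.measurable measurable_const))
    (fun s => norm_nonneg _) (by positivity) (fun s hs => hs.1)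
    (fun s hs => hbound n (le_of_max_le_right hn) β hβ s hs.2)

/-- there is `a > 0` such that
`lim_{n→∞} n^{r/2} sup_{β∈K} ∫_{n^{1/7} ≤ |s| ≤ a√n} |f_n(s;β)| ds = 0`,
stated as uniform convergence in `β ∈ K`. -/
theorem charFn_middle_range_integral_bound
    (θ : ℤ → ℝ) (hθ0 : ∀ k, 0 ≤ θ k) (hθs : Summable θ) (hmass : 0 < ∑' k : ℤ, θ k)
    (hsupp : twoPointSupport θ)
    (r : ℕ) (K : Set ℝ) (hK : IsCompact K) (hKD : K ⊆ cgfDom θ) :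
    ∃ a : ℝ, 0 < a ∧ ∀ ε > 0, ∃ N : ℕ, ∀ n ≥ N, ∀ β ∈ K,
      (n : ℝ) ^ ((r : ℝ) / 2) *
        ∫ s in {s : ℝ | (n : ℝ) ^ ((1 : ℝ) / 7) ≤ |s| ∧ |s| ≤ a * Real.sqrt n},
          ‖charFn θ n (s : ℂ) β‖ < ε :=
  charFn_middle_range_integral_bound_general θ hθ0 hsupp r K hK hKD

end
end

section
/- Let (Ω, 𝔉, P) be a probability space, z₀ ∈ ℂ, ρ > 0, C < ∞ and κ ∈ (0,1). For each n ∈ ℕ₀ let g_n : Ω × ℂ → ℂ be such that for every ω ∈ Ω the function g_n(ω, ·) is holomorphic on an open set containing the closed disc {z : |z − z₀| ≤ 2ρ}, and ω ↦ g_n(ω, z) is measurable for every z. Assume E|g_{n+1}(·, z) − g_n(·, z)| ≤ C κⁿ for all n ∈ ℕ₀ and all z with |z − z₀| = 2ρ. Then for every ε > 0 with e^{ε}κ < 1 there exist a random variable M with M < ∞ almost surely and a map g_∞ : Ω × ℂ → ℂ such that g_∞(ω, ·) is holomorphic on the open disc {z : |z − z₀| < ρ} for almost every ω, and almost surely sup_{|z−z₀|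 < ρ} |g_n(·, z) − g_∞(·, z)| ≤ M e^{−εn} for all n ∈ ℕ₀. -/
open MeasureTheory Metric Real Filter

open TopologicalSpace

open scoped ENNReal Topology

/-!
Cauchy's integral formula on the circle of radius `2ρ` bounds `|g_{n+1} - g_n|` on the ball of
radius `ρ` by `π⁻¹ D_n`, where `D_n` is the `L¹` norm of `g_{n+1} - g_n` on the circle. By Tonelli
and the moment bound, `E[e^{εn} D_n] ≤ 2πC (e^ε κ)^n`, so `∑ e^{εn} D_n` is integrable, hence
almost surely finite. On that event the tail `∑_{m ≥ n} D_m` is at most `e^{-εn} ∑ e^{εm} D_m`: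
this yields the limit, the rate `e^{-εn}`, and uniform convergence on the ball, so the limit is
holomorphic there.
-/

theorem enorm_circleIntegral_sub_inv_smul_le {E : Type*} [NormedAddCommGroup E]
    [NormedSpace ℂ E] (f : ℂ → E) {c z : ℂ} {r R : ℝ} (hrR : r < R) (hz : z ∈ ball c r) :
    ‖∮ w in C(c, R), (w - z)⁻¹ • f w‖ₑ ≤
      ENNReal.ofReal (R / (R - r)) * ∫⁻ θ in Set.Ioc 0 (2 * π), ‖f (circleMap c R θ)‖ₑ := by
  have hzr : dist z c < r := hz
  have hR : 0 < R := dist_nonneg.trans_lt hzr |>.trans hrR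
  have hgap : ∀ θ, R - r ≤ ‖circleMap c R θ - z‖ := fun θ => by
    have hw : dist (circleMap c R θ) c = R := circleMap_mem_sphere c hR.le θ
    have := dist_triangle (circleMap c R θ) z c
    rw [← dist_eq_norm]
    linarith
  have hpoint : ∀ θ, ‖deriv (circleMap c R) θ • (circleMap c R θ - z)⁻¹ • f (circleMap c R θ)‖ₑ
      ≤ ENNReal.ofReal (R / (R - r)) * ‖f (circleMap c R θ)‖ₑ := fun θ => by
    rw [← ofReal_norm, ← ofReal_norm, ← ENNReal.ofReal_mul (by bound)]
    refine ENNReal.ofReal_le_ofReal ?_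
    rw [norm_smul, norm_smul, norm_inv, deriv_circleMap, norm_mul, norm_circleMap_zero,
      Complex.norm_I, mul_one, abs_of_pos hR, div_eq_mul_inv, mul_assoc]
    gcongr
    exact hgap θ
  calc ‖∮ w in C(c, R), (w - z)⁻¹ • f w‖ₑ
      ≤ ∫⁻ θ in Set.Ioc 0 (2 * π),
          ‖deriv (circleMap c R) θ • (circleMap c R θ - z)⁻¹ • f (circleMap c R θ)‖ₑ := by
        rw [circleIntegral, intervalIntegral.integral_of_le two_pi_pos.le]
        exact enorm_integral_le_lintegral_enorm _
    _ ≤ ∫⁻ θ in Set.Ioc 0 (2 * π), ENNReal.ofReal (R / (R - r)) * ‖f (circleMap c R θ)‖ₑ :=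
        lintegral_mono hpoint
    _ = _ := lintegral_const_mul' _ _ ENNReal.ofReal_ne_top

theorem enorm_le_lintegral_enorm_circleMap {E : Type*} [NormedAddCommGroup E] [NormedSpace ℂ E]
    [CompleteSpace E] {f : ℂ → E} {c z : ℂ} {r R : ℝ} (hrR : r < R)
    (hf : DifferentiableOn ℂ f (closedBall c R)) (hz : z ∈ ball c r) :
    ‖f z‖ₑ ≤ ENNReal.ofReal (R / (2 * π * (R - r))) *
      ∫⁻ θ in Set.Ioc 0 (2 * π), ‖f (circleMap c R θ)‖ₑ := by
  have hcauchy : ENNReal.ofReal (2 * π) * ‖f z‖ₑ = ‖∮ w in C(c, R), (w - z)⁻¹ • f w‖ₑ := by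
    rw [hf.circleIntegral_sub_inv_smul (ball_subset_ball hrR.le hz), ← ofReal_norm,
      ← ofReal_norm, ← ENNReal.ofReal_mul two_pi_pos.le, norm_smul]
    simp [abs_of_pos pi_pos]
  have hsplit : ENNReal.ofReal (R / (2 * π * (R - r)))
      = ENNReal.ofReal (2 * π)⁻¹ * ENNReal.ofReal (R / (R - r)) := by
    rw [← ENNReal.ofReal_mul (by positivity)]
    congr 1
    field_simp
  calc ‖f z‖ₑ = ENNReal.ofReal (2 * π)⁻¹ * (ENNReal.ofReal (2 * π) * ‖f z‖ₑ) := by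
        rw [← mul_assoc, ← ENNReal.ofReal_mul (by positivity), inv_mul_cancel₀ two_pi_pos.ne',
          ENNReal.ofReal_one, one_mul]
    _ ≤ _ := by
        rw [hsplit, mul_assoc, hcauchy]
        gcongr
        exact enorm_circleIntegral_sub_inv_smul_le f hrR hz

theorem tsum_nat_add_le_exp_neg_mul_tsum {B : ℕ → ℝ≥0∞} {ε : ℝ} (hε : 0 ≤ ε) (n : ℕ) :
    ∑' m, B (n + m) ≤
      ENNReal.ofReal (exp (-ε * n)) * ∑' m : ℕ, ENNReal.ofReal (exp (ε * m)) * B m := by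
  have hweight : ∀ m : ℕ, B (n + m) ≤ ENNReal.ofReal (exp (-ε * n)) *
      (ENNReal.ofReal (exp (ε * ↑(n + m))) * B (n + m)) := fun m => by
    have hexp : -ε * n + ε * ↑(n + m) = ε * m := by push_cast; ring
    rw [← mul_assoc, ← ENNReal.ofReal_mul (exp_nonneg _), ← exp_add, hexp]
    exact le_mul_of_one_le_left' (ENNReal.one_le_ofReal.2 (one_le_exp (by positivity)))
  calc ∑' m, B (n + m)
      ≤ ∑' m, ENNReal.ofReal (exp (-ε * n)) *
          (ENNReal.ofReal (exp (ε * ↑(n + m))) * B (n + m)) := ENNReal.tsum_le_tsum hweight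
    _ = ENNReal.ofReal (exp (-ε * n)) *
          ∑' m, ENNReal.ofReal (exp (ε * ↑(n + m))) * B (n + m) := ENNReal.tsum_mul_left
    _ ≤ _ := mul_le_mul_right (ENNReal.tsum_comp_le_tsum_of_injective (add_right_injective n)
          fun m : ℕ => ENNReal.ofReal (exp (ε * m)) * B m) _

theorem dist_limUnder_le_of_tsum_exp_mul_ne_top {E : Type*} [PseudoMetricSpace E]
    [CompleteSpace E] [Nonempty E] {u : ℕ → E} {B : ℕ → ℝ≥0∞} {ε : ℝ} (hε : 0 ≤ ε)
    (hu : ∀ n, edist (u n) (u (n + 1)) ≤ B n)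
    (hB : ∑' n : ℕ, ENNReal.ofReal (exp (ε * n)) * B n ≠ ∞) (n : ℕ) :
    dist (u n) (limUnder atTop u) ≤
      (∑' m : ℕ, ENNReal.ofReal (exp (ε * m)) * B m).toReal * exp (-ε * n) := by
  have hB' : ∑' n, B n ≠ ∞ := ne_top_of_le_ne_top hB (ENNReal.tsum_le_tsum fun m =>
    le_mul_of_one_le_left' (ENNReal.one_le_ofReal.2 (one_le_exp (by positivity))))
  have hlim := (cauchySeq_of_edist_le_of_tsum_ne_top B hu hB').tendsto_limUnder
  have hedist := (edist_le_tsum_of_edist_le_of_tendsto B hu hlim n).trans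
    (tsum_nat_add_le_exp_neg_mul_tsum (B := B) hε n)
  rw [dist_edist, mul_comm, ← ENNReal.toReal_ofReal (exp_nonneg (-ε * n)), ← ENNReal.toReal_mul]
  exact ENNReal.toReal_mono (ENNReal.mul_ne_top ENNReal.ofReal_ne_top hB) hedist

theorem differentiableOn_of_norm_sub_le_of_tendsto {E : Type*} [NormedAddCommGroup E]
    [NormedSpace ℂ E] [CompleteSpace E] {u : ℕ → ℂ → E} {f : ℂ → E} {U : Set ℂ} {a : ℕ → ℝ}
    (hU : IsOpen U) (hu : ∀ n, DifferentiableOn ℂ (u n) U) (ha : Tendsto a atTop (𝓝 0))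
    (hbound : ∀ n, ∀ z ∈ U, ‖u n z - f z‖ ≤ a n) : DifferentiableOn ℂ f U := by
  have hunif : TendstoUniformlyOn u f atTop U :=
    Metric.tendstoUniformlyOn_iff.2 fun _ hδ => (ha.eventually (gt_mem_nhds hδ)).mono
      fun n hn z hz => by rw [dist_comm, dist_eq_norm]; exact (hbound n z hz).trans_lt hn
  exact hunif.tendstoLocallyUniformlyOn.differentiableOn (Eventually.of_forall hu) hU

section RandomContinuous

variable {Ω T E : Type*} [MeasurableSpace Ω] [TopologicalSpace T] [MetrizableSpace T]
  [SecondCountableTopology T] [MeasurableSpace T] [OpensMeasurableSpace T]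
  [NormedAddCommGroup E] [MeasurableSpace E] [BorelSpace E]
  {F : Ω → T → E}

theorem measurable_uncurry_of_continuous_of_measurable' (hcont : ∀ ω, Continuous (F ω))
    (hmeas : ∀ t, Measurable fun ω => F ω t) : Measurable (Function.uncurry F) :=
  (measurable_uncurry_of_continuous_of_measurable (u := fun t ω => F ω t) hcont hmeas).comp
    measurable_swap

theorem measurable_lintegral_enorm_of_continuous_of_measurable (ν : Measure T) [SFinite ν]
    (hcont : ∀ ω, Continuous (F ω)) (hmeas : ∀ t, Measurable fun ω => F ω t) :
    Measurable fun ω => ∫⁻ t, ‖F ω t‖ₑ ∂ν :=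
  (measurable_uncurry_of_continuous_of_measurable' hcont hmeas).enorm.lintegral_prod_right'

theorem lintegral_lintegral_enorm_le_of_continuous_of_measurable (P : Measure Ω) [SFinite P]
    (ν : Measure T) [SFinite ν] (hcont : ∀ ω, Continuous (F ω))
    (hmeas : ∀ t, Measurable fun ω => F ω t) {a : ℝ≥0∞} (hbound : ∀ t, ∫⁻ ω, ‖F ω t‖ₑ ∂P ≤ a) :
    ∫⁻ ω, ∫⁻ t, ‖F ω t‖ₑ ∂ν ∂P ≤ a * ν Set.univ := by
  rw [lintegral_lintegral_swap
    (measurable_uncurry_of_continuous_of_measurable' hcont hmeas).enorm.aemeasurable,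
    ← lintegral_const]
  exact lintegral_mono hbound

theorem ae_tsum_ne_top_of_lintegral_le_geometric {P : Measure Ω} {X : ℕ → Ω → ℝ≥0∞}
    (hX : ∀ n, AEMeasurable (X n) P) {a q : ℝ≥0∞} (ha : a ≠ ∞) (hq : q < 1)
    (hbound : ∀ n, ∫⁻ ω, X n ω ∂P ≤ a * q ^ n) :
    ∀ᵐ ω ∂P, ∑' n, X n ω ≠ ∞ := by
  refine (ae_lt_top' (AEMeasurable.tsum hX) ?_).mono fun ω => ne_of_lt
  rw [lintegral_tsum hX]
  refine ne_top_of_le_ne_top ?_ (ENNReal.tsum_le_tsum hbound)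
  rw [ENNReal.tsum_mul_left, ENNReal.tsum_geometric]
  exact ENNReal.mul_ne_top ha (ENNReal.inv_ne_top.2 (tsub_pos_of_lt hq).ne')

theorem ae_tsum_exp_mul_lintegral_enorm_ne_top (P : Measure Ω) [SFinite P] (ν : Measure T)
    [IsFiniteMeasure ν] {G : ℕ → Ω → T → E}
    (hcont : ∀ n ω, Continuous (G n ω)) (hmeas : ∀ n t, Measurable fun ω => G n ω t)
    {C κ ε : ℝ} (hκ : 0 ≤ κ) (hεκ : exp ε * κ < 1)
    (hbound : ∀ n t, ∫⁻ ω, ‖G n ω t‖ₑ ∂P ≤ ENNReal.ofReal (C * κ ^ n)) :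
    ∀ᵐ ω ∂P, ∑' n : ℕ, ENNReal.ofReal (exp (ε * n)) * ∫⁻ t, ‖G n ω t‖ₑ ∂ν ≠ ∞ := by
  have hD := fun n => measurable_lintegral_enorm_of_continuous_of_measurable ν (hcont n) (hmeas n)
  refine ae_tsum_ne_top_of_lintegral_le_geometric (fun n => ((hD n).const_mul _).aemeasurable)
    (a := ENNReal.ofReal C * ν Set.univ)
    (ENNReal.mul_ne_top ENNReal.ofReal_ne_top (measure_ne_top ν Set.univ))
    (ENNReal.ofReal_lt_one.2 hεκ) fun n => ?_
  have hgeom : ENNReal.ofReal (exp (ε * n)) * ENNReal.ofReal (C * κ ^ n)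
      = ENNReal.ofReal C * ENNReal.ofReal (exp ε * κ) ^ n := by
    rw [← ENNReal.ofReal_mul (exp_nonneg _), ← ENNReal.ofReal_pow (by positivity),
      ← ENNReal.ofReal_mul' (by positivity), mul_pow, ← exp_nat_mul]
    ring_nf
  calc ∫⁻ ω, ENNReal.ofReal (exp (ε * n)) * ∫⁻ t, ‖G n ω t‖ₑ ∂ν ∂P
      = ENNReal.ofReal (exp (ε * n)) * ∫⁻ ω, ∫⁻ t, ‖G n ω t‖ₑ ∂ν ∂P :=
        lintegral_const_mul _ (hD n)
    _ ≤ ENNReal.ofReal (exp (ε * n)) * (ENNReal.ofReal (C * κ ^ n) * ν Set.univ) := by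
        gcongr
        exact lintegral_lintegral_enorm_le_of_continuous_of_measurable P ν (hcont n) (hmeas n)
          (hbound n)
    _ = ENNReal.ofReal C * ν Set.univ * ENNReal.ofReal (exp ε * κ) ^ n := by
        rw [← mul_assoc, hgeom]
        ring

theorem ae_tsum_exp_mul_lintegral_circleMap_ne_top (P : Measure Ω) [SFinite P]
    {h : ℕ → Ω → ℂ → ℂ} {c : ℂ} {R : ℝ} (hR : 0 ≤ R)
    (hcont : ∀ n ω, ContinuousOn (h n ω) (sphere c R))
    (hmeas : ∀ n z, Measurable fun ω => h n ω z) {C κ ε : ℝ} (hκ : 0 ≤ κ)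
    (hεκ : exp ε * κ < 1)
    (hbound : ∀ n z, dist z c = R → ∫⁻ ω, ‖h n ω z‖ₑ ∂P ≤ ENNReal.ofReal (C * κ ^ n)) :
    ∀ᵐ ω ∂P, ∑' n : ℕ, ENNReal.ofReal (exp (ε * n)) *
      ∫⁻ θ in Set.Ioc 0 (2 * π), ‖h n ω (circleMap c R θ)‖ₑ ≠ ∞ :=
  ae_tsum_exp_mul_lintegral_enorm_ne_top P _ (G := fun n ω θ => h n ω (circleMap c R θ))
    (fun n ω => (hcont n ω).comp_continuous (continuous_circleMap c R) (circleMap_mem_sphere c hR))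
    (fun n _ => hmeas n _) hκ hεκ fun n θ => hbound n _ (circleMap_mem_sphere c hR θ)

end RandomContinuous

theorem random_analytic_exponential_convergence_general
    {Ω : Type*} [MeasurableSpace Ω] (P : Measure Ω) [IsProbabilityMeasure P]
    (z₀ : ℂ) (ρ : ℝ) (hρ : 0 < ρ) (C : ℝ) (κ : ℝ) (hκ0 : 0 < κ)
    (g : ℕ → Ω → ℂ → ℂ)
    (hol : ∀ (n : ℕ) (ω : Ω), ∃ U : Set ℂ, IsOpen U ∧ closedBall z₀ (2 * ρ) ⊆ U ∧
      DifferentiableOn ℂ (g n ω) U)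
    (meas : ∀ (n : ℕ) (z : ℂ), Measurable fun ω => g n ω z)
    (hmom : ∀ (n : ℕ) (z : ℂ), dist z z₀ = 2 * ρ →
      ∫⁻ ω, (‖g (n + 1) ω z - g n ω z‖₊ : ENNReal) ∂P ≤ ENNReal.ofReal (C * κ ^ n)) :
    ∀ ε : ℝ, 0 < ε → Real.exp ε * κ < 1 →
      ∃ (M : Ω → ℝ) (ginf : Ω → ℂ → ℂ),
        (∀ᵐ ω ∂P, DifferentiableOn ℂ (ginf ω) (ball z₀ ρ)) ∧
        (∀ᵐ ω ∂P, ∀ n : ℕ, ∀ z ∈ ball z₀ ρ,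
          ‖g n ω z - ginf ω z‖ ≤ M ω * Real.exp (-ε * n)) := by
  intro ε hε hεκ
  have hdiff : ∀ n ω, DifferentiableOn ℂ (g n ω) (closedBall z₀ (2 * ρ)) := fun n ω =>
    let ⟨_, _, hsub, hU⟩ := hol n ω; hU.mono hsub
  set K := ENNReal.ofReal (2 * ρ / (2 * π * (2 * ρ - ρ)))
  set D : ℕ → Ω → ℝ≥0∞ := fun n ω =>
    ∫⁻ θ in Set.Ioc 0 (2 * π), ‖(g (n + 1) ω - g n ω) (circleMap z₀ (2 * ρ) θ)‖ₑ
  have hstep : ∀ n ω, ∀ z ∈ ball z₀ ρ, edist (g n ω z) (g (n + 1) ω z) ≤ K * D n ω :=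
    fun n ω z hz => by
      rw [edist_comm, edist_eq_enorm_sub]
      exact enorm_le_lintegral_enorm_circleMap (by linarith) ((hdiff _ ω).sub (hdiff n ω)) hz
  have hD : ∀ᵐ ω ∂P, ∑' n : ℕ, ENNReal.ofReal (exp (ε * n)) * D n ω ≠ ∞ :=
    ae_tsum_exp_mul_lintegral_circleMap_ne_top P (h := fun n ω => g (n + 1) ω - g n ω)
      (by positivity)
      (fun n ω => ((hdiff _ ω).sub (hdiff n ω)).continuousOn.mono sphere_subset_closedBall)
      (fun n z => (meas _ z).sub (meas n z)) hκ0.le hεκ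
      fun n z hz => by simpa only [Pi.sub_apply, ← enorm_eq_nnnorm] using hmom n z hz
  have hKD : ∀ᵐ ω ∂P, ∑' n : ℕ, ENNReal.ofReal (exp (ε * n)) * (K * D n ω) ≠ ∞ :=
    hD.mono fun ω hω => by
      simp_rw [mul_left_comm _ K, ENNReal.tsum_mul_left]
      exact ENNReal.mul_ne_top ENNReal.ofReal_ne_top hω
  have hclose : ∀ᵐ ω ∂P, ∀ n : ℕ, ∀ z ∈ ball z₀ ρ, ‖g n ω z - limUnder atTop (g · ω z)‖ ≤
      (∑' m : ℕ, ENNReal.ofReal (exp (ε * m)) * (K * D m ω)).toReal * exp (-ε * n) :=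
    hKD.mono fun ω hω n z hz => by
      rw [← dist_eq_norm]
      exact dist_limUnder_le_of_tsum_exp_mul_ne_top hε.le (fun n => hstep n ω z hz) hω n
  have hdecay : Tendsto (fun n : ℕ => exp (-ε * n)) atTop (𝓝 0) := by
    simp_rw [neg_mul]
    exact tendsto_exp_neg_atTop_nhds_zero.comp (tendsto_natCast_atTop_atTop.const_mul_atTop hε)
  refine ⟨_, _, hclose.mono fun ω hω => ?_, hclose⟩
  exact differentiableOn_of_norm_sub_le_of_tendsto isOpen_ball
    (fun n => (hdiff n ω).mono (ball_subset_ball (by linarith) |>.trans ball_subset_closedBall))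
    (by simpa using hdecay.const_mul _) hω

/-- almost sure exponentially fast convergence of a sequence of random
analytic functions whose successive circle-averaged `L¹`-differences decay geometrically. -/
theorem random_analytic_exponential_convergence
    {Ω : Type*} [MeasurableSpace Ω] (P : Measure Ω) [IsProbabilityMeasure P]
    (z₀ : ℂ) (ρ : ℝ) (hρ : 0 < ρ) (C : ℝ) (κ : ℝ) (hκ0 : 0 < κ) (hκ1 : κ < 1)
    (g : ℕ → Ω → ℂ → ℂ)
    (hol : ∀ (n : ℕ) (ω : Ω), ∃ U : Set ℂ, IsOpen U ∧ closedBall z₀ (2 * ρ) ⊆ U ∧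
      DifferentiableOn ℂ (g n ω) U)
    (meas : ∀ (n : ℕ) (z : ℂ), Measurable fun ω => g n ω z)
    (hmom : ∀ (n : ℕ) (z : ℂ), dist z z₀ = 2 * ρ →
      ∫⁻ ω, (‖g (n + 1) ω z - g n ω z‖₊ : ENNReal) ∂P ≤ ENNReal.ofReal (C * κ ^ n)) :
    ∀ ε : ℝ, 0 < ε → Real.exp ε * κ < 1 →
      ∃ (M : Ω → ℝ) (ginf : Ω → ℂ → ℂ),
        (∀ᵐ ω ∂P, DifferentiableOn ℂ (ginf ω) (ball z₀ ρ)) ∧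
        (∀ᵐ ω ∂P, ∀ n : ℕ, ∀ z ∈ ball z₀ ρ,
          ‖g n ω z - ginf ω z‖ ≤ M ω * Real.exp (-ε * n)) :=
  random_analytic_exponential_convergence_general P z₀ ρ hρ C κ hκ0 g hol meas hmom
end
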